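/- arXiv:1911.08636 — 5 statements merged into one kernel-verified Lean document; each statement's English description precedes it below -/
import Mathlib

section
/- Let P = {x ∈ ℝⁿ : Ax = b, Bx ≤ d}, let x₀ ∈ P, and let y ∈ ℝⁿ be strictly feasible at x₀. If g ∈ ℝⁿ satisfies Ag = 0 and g is conformal to y with respect to B (i.e., for every index i, (Bg)_i·(By)_i ≥ 0, and (By)_i = 0 implies (Bg)_i = 0), then g is strictly feasible at x₀. -/
/-! Moving along `g` preserves `A x = b`. An inequality `(B x)ᵢ ≤ dᵢ` that does not increase along
`g` stays satisfied for every step length; one that does increase has `(B g)ᵢ > 0`, hence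
`(B y)ᵢ > 0` by conformality, so it is slack at `x₀` (a positive step along `y` keeps it) and
survives small steps. Finitely many constraints leave a common positive step length. -/

open Filter Topology Matrix

theorem pos_of_mul_nonneg_of_pos {u v : ℝ} (huv : 0 ≤ u * v) (hv : v = 0 → u = 0) (hu : 0 < u) :
    0 < v :=
  (nonneg_of_mul_nonneg_right huv hu).lt_of_ne fun h => hu.ne' (hv h.symm)

theorem eventually_add_mul_le {a c v : ℝ} (hac : a ≤ c) (hslack : 0 < v → a < c) :
    ∀ᶠ t in 𝓝[>] (0 : ℝ), a + t * v ≤ c := by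
  by_cases hv : 0 < v
  · have hcont : Tendsto (fun t : ℝ => a + t * v) (𝓝[>] 0) (𝓝 (a + 0 * v)) :=
      tendsto_nhdsWithin_of_tendsto_nhds
        ((by fun_prop : Continuous fun t : ℝ => a + t * v).tendsto 0)
    rw [zero_mul, add_zero] at hcont
    exact (hcont.eventually_lt_const (hslack hv)).mono fun t ht => ht.le
  · filter_upwards [self_mem_nhdsWithin] with t (ht : 0 < t)
    nlinarith

/-- If `y` is strictly feasible at `x₀ ∈ P`, `A g = 0`, and `g` is conformal
to `y` with respect to `B`, then `g` is strictly feasible at `x₀`. -/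
theorem conformal_strictly_feasible
    (n mA mB : ℕ) (A : Matrix (Fin mA) (Fin n) ℝ) (B : Matrix (Fin mB) (Fin n) ℝ)
    (b : Fin mA → ℝ) (d : Fin mB → ℝ)
    (P : Set (Fin n → ℝ))
    (hP : P = {x | A.mulVec x = b ∧ ∀ i, B.mulVec x i ≤ d i})
    (x₀ : Fin n → ℝ) (hx₀ : x₀ ∈ P)
    (y : Fin n → ℝ) (hy : ∃ α : ℝ, 0 < α ∧ x₀ + α • y ∈ P)
    (g : Fin n → ℝ) (hAg : A.mulVec g = 0)
    (hconf : ∀ i, B.mulVec g i * B.mulVec y i ≥ 0 ∧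
      (B.mulVec y i = 0 → B.mulVec g i = 0)) :
    ∃ α : ℝ, 0 < α ∧ x₀ + α • g ∈ P := by
  subst hP
  obtain ⟨hAx₀, hBx₀⟩ := hx₀
  obtain ⟨α, hα, -, hBy⟩ := hy
  have hslack : ∀ i, 0 < (B *ᵥ g) i → (B *ᵥ x₀) i < d i := fun i hgi => by
    have hyi := pos_of_mul_nonneg_of_pos (hconf i).1 (hconf i).2 hgi
    have hi := hBy i
    simp only [mulVec_add, mulVec_smul, Pi.add_apply, Pi.smul_apply, smul_eq_mul] at hi
    linarith [mul_pos hα hyi]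
  have hsmall : ∀ᶠ t in 𝓝[>] (0 : ℝ), ∀ i, (B *ᵥ x₀) i + t * (B *ᵥ g) i ≤ d i :=
    eventually_all.2 fun i => eventually_add_mul_le (hBx₀ i) (hslack i)
  obtain ⟨t, hBt, ht⟩ := (hsmall.and self_mem_nhdsWithin).exists
  exact ⟨t, ht, by simp [mulVec_add, mulVec_smul, hAx₀, hAg], by simpa [mulVec_add, mulVec_smul]⟩
end

section
/- Let B ∈ ℝ^{m_B×n}, c, y, g ∈ ℝⁿ, and λ > 0. Assume cᵀy < 0, ‖By‖₁ > 0, ‖Bg‖₁ > 0, ‖B(y − λg)‖₁ > 0, that cᵀg/‖Bg‖₁ > cᵀy/‖By‖₁, and that ‖B(y − λg)‖₁ ≤ ‖By‖₁ − λ‖Bg‖₁. Then cᵀ(y − λg)/‖B(y − λg)‖₁ < cᵀy/‖By‖₁. -/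
open Finset Matrix

theorem sub_mul_div_lt_div_of_div_lt_div {𝕜 : Type*} [Field 𝕜] [LinearOrder 𝕜]
    [IsStrictOrderedRing 𝕜] {p q a b d lam : 𝕜} (hlam : 0 < lam) (hp : p < 0)
    (ha : 0 < a) (hb : 0 < b) (hd : 0 < d) (hsteep : p / a < q / b) (hdle : d ≤ a - lam * b) :
    (p - lam * q) / d < p / a := by
  rw [div_lt_div_iff₀ ha hb] at hsteep
  rw [div_lt_div_iff₀ hd ha]
  calc (p - lam * q) * a = p * a - lam * (q * a) := by ring
    _ < p * a - lam * (p * b) := by gcongr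
    _ = p * (a - lam * b) := by ring
    _ ≤ p * d := mul_le_mul_of_nonpos_left hdle hp.le

/-- Steepness arithmetic. If `cᵀy < 0`, the three `ℓ¹`-norms are positive,
`g` is strictly less steep than `y`, and `‖B(y − λg)‖₁ ≤ ‖By‖₁ − λ‖Bg‖₁`, then
`y − λg` is strictly steeper than `y`. -/
theorem steepness_strict_decrease
    (n mB : ℕ) (B : Matrix (Fin mB) (Fin n) ℝ)
    (c y g : Fin n → ℝ) (lam : ℝ) (hlam : 0 < lam)
    (hcy : c ⬝ᵥ y < 0)
    (hBy : 0 < ∑ i, |B.mulVec y i|)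
    (hBg : 0 < ∑ i, |B.mulVec g i|)
    (hByg : 0 < ∑ i, |B.mulVec (y - lam • g) i|)
    (hsteep : c ⬝ᵥ g / (∑ i, |B.mulVec g i|) > c ⬝ᵥ y / (∑ i, |B.mulVec y i|))
    (hnorm : ∑ i, |B.mulVec (y - lam • g) i| ≤
      (∑ i, |B.mulVec y i|) - lam * ∑ i, |B.mulVec g i|) :
    c ⬝ᵥ (y - lam • g) / (∑ i, |B.mulVec (y - lam • g) i|) <
      c ⬝ᵥ y / (∑ i, |B.mulVec y i|) := by
  rw [dotProduct_sub, dotProduct_smul, smul_eq_mul]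
  exact sub_mul_div_lt_div_of_div_lt_div hlam hcy hBy hBg hByg hsteep hnorm
end

section
/- Let P = {x ∈ ℝⁿ : Ax = b, Bx ≤ d}, let c ∈ ℝⁿ, and let x₀ ∈ P. Let y ∈ ℝⁿ be a steepest-descent augmenting direction at x₀, i.e., y is strictly feasible at x₀, By ≠ 0, and cᵀy/‖By‖₁ ≤ cᵀz/‖Bz‖₁ for every z strictly feasible at x₀ with Bz ≠ 0; assume moreover cᵀy < 0. Suppose y = Σ_{j=1}^t λ_j g_j with λ_j > 0, Ag_j = 0, Bg_j ≠ 0, and each g_j conformal to y with respect to B. Then cᵀg_j/‖Bg_j‖₁ = cᵀy/‖By‖₁ for every j ∈ {1, …, t}. -/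
open Finset Matrix

/-- `y` is strictly feasible at `x₀` with respect to the set `P`. -/
def StrictlyFeasible {n : ℕ} (P : Set (Fin n → ℝ)) (x₀ y : Fin n → ℝ) : Prop :=
  ∃ α : ℝ, 0 < α ∧ x₀ + α • y ∈ P

/-!
If `y = ∑ λⱼ gⱼ` is a conformal decomposition, then `‖By‖₁ = ∑ λⱼ ‖Bgⱼ‖₁` and `cᵀy = ∑ λⱼ cᵀgⱼ`,
so the steepness of `y` is a weighted average of the steepnesses of the `gⱼ`. Conformality also
makes every `gⱼ` strictly feasible at `x₀` (a constraint that `gⱼ` moves towards is one `y` moves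
towards, hence is not tight at `x₀`), so no `gⱼ` is steeper than `y`; an average of numbers
bounded below by it equals it only if all of them do.
-/

/-- The paper's "`z` is conformal to `y` with respect to `B`" is
`SignConformal (B *ᵥ z) (B *ᵥ y)`. -/
def SignConformal {ι : Type*} (u v : ι → ℝ) : Prop :=
  ∀ i, u i * v i ≥ 0 ∧ (v i = 0 → u i = 0)

theorem SignConformal.pos_of_pos {ι : Type*} {u v : ι → ℝ} (h : SignConformal u v) {i : ι}
    (hu : 0 < u i) : 0 < v i := by
  rcases lt_trichotomy (v i) 0 with hv | hv | hv
  · nlinarith [(h i).1]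
  · exact absurd ((h i).2 hv) hu.ne'
  · exact hv

theorem abs_eq_sum_mul_abs_of_signConformal {κ : Type*} [Fintype κ] {x : ℝ} (w a : κ → ℝ)
    (ha : ∀ k, a k * x ≥ 0 ∧ (x = 0 → a k = 0))
    (hx : x = ∑ k, w k * a k) : |x| = ∑ k, w k * |a k| := by
  by_cases hx0 : x = 0
  · simp [hx0, fun k => (ha k).2 hx0]
  -- conformality means `|a k| * |x| = a k * x`, so after multiplying by `|x|` both sides are `x * x`
  refine mul_left_cancel₀ (abs_ne_zero.mpr hx0) ?_
  calc |x| * |x| = x * x := abs_mul_abs_self x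
    _ = ∑ k, w k * (a k * x) := by rw [hx, Finset.sum_mul, ← hx]; simp only [mul_assoc]
    _ = ∑ k, w k * (|a k| * |x|) := by
      simp only [← abs_mul, abs_of_nonneg (ha _).1]
    _ = |x| * ∑ k, w k * |a k| := by
      rw [Finset.mul_sum]; exact Finset.sum_congr rfl fun k _ => by ring

theorem sum_abs_sum_smul_of_signConformal {ι κ : Type*} [Fintype ι] [Fintype κ]
    (w : κ → ℝ) (v : κ → ι → ℝ)
    (hv : ∀ k, SignConformal (v k) (∑ k, w k • v k)) :
    ∑ i, |(∑ k, w k • v k) i| = ∑ k, w k * ∑ i, |v k i| := by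
  have hcoord i : |(∑ k, w k • v k) i| = ∑ k, w k * |v k i| :=
    abs_eq_sum_mul_abs_of_signConformal w (fun k => v k i) (fun k => hv k i) (by simp)
  simp only [hcoord, Finset.mul_sum]
  exact Finset.sum_comm

theorem sum_abs_pos_of_ne_zero {ι : Type*} [Fintype ι] {v : ι → ℝ} (hv : v ≠ 0) :
    0 < ∑ i, |v i| := by
  obtain ⟨i, hi⟩ := Function.ne_iff.mp hv
  exact Finset.sum_pos' (fun i _ => abs_nonneg (v i)) ⟨i, Finset.mem_univ i, abs_pos.mpr hi⟩

theorem div_eq_of_le_div_of_sum_mul_eq {κ : Type*} [Fintype κ] (w p q : κ → ℝ) {r : ℝ}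
    (hw : ∀ k, 0 < w k) (hq : ∀ k, 0 < q k) (hle : ∀ k, r ≤ p k / q k)
    (hsum : ∑ k, w k * p k = r * ∑ k, w k * q k) (k : κ) : p k / q k = r := by
  have hslack k : 0 ≤ w k * (p k - r * q k) :=
    mul_nonneg (hw k).le (sub_nonneg.mpr ((le_div_iff₀ (hq k)).mp (hle k)))
  have hsum_slack : ∑ k, w k * (p k - r * q k) = 0 := by
    simp only [mul_sub, Finset.sum_sub_distrib, hsum, Finset.mul_sum]
    simp only [mul_left_comm, sub_self]
  have hk := (Finset.sum_eq_zero_iff_of_nonneg fun k _ => hslack k).mp hsum_slack k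
    (Finset.mem_univ k)
  rw [div_eq_iff (hq k).ne']
  linarith [(mul_eq_zero.mp hk).resolve_left (hw k).ne']

theorem eventually_le_of_pos_imp_pos {a u v d α : ℝ} (ha : a ≤ d) (hα : 0 < α)
    (hu : a + α * u ≤ d) (hvu : 0 < v → 0 < u) : ∀ᶠ ε in nhdsWithin 0 (Set.Ioi 0), a + ε * v ≤ d := by
  by_cases hv : 0 < v
  · have had : a < d := by nlinarith [hvu hv]
    have hcont : Filter.Tendsto (fun ε : ℝ => a + ε * v) (nhds 0) (nhds a) :=
      (by fun_prop : Continuous fun ε : ℝ => a + ε * v).tendsto' 0 a (by simp)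
    exact nhdsWithin_le_nhds ((hcont.eventually (gt_mem_nhds had)).mono fun _ h => h.le)
  · exact eventually_nhdsWithin_of_forall fun ε (hε : 0 < ε) => by nlinarith

theorem StrictlyFeasible.of_pos_imp_pos {n mA mB : ℕ} {A : Matrix (Fin mA) (Fin n) ℝ}
    {B : Matrix (Fin mB) (Fin n) ℝ} {b : Fin mA → ℝ} {d : Fin mB → ℝ} {x₀ y z : Fin n → ℝ}
    (hx₀ : x₀ ∈ {x | A *ᵥ x = b ∧ ∀ i, (B *ᵥ x) i ≤ d i})
    (hy : StrictlyFeasible {x | A *ᵥ x = b ∧ ∀ i, (B *ᵥ x) i ≤ d i} x₀ y)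
    (hAz : A *ᵥ z = 0) (hBz : ∀ i, 0 < (B *ᵥ z) i → 0 < (B *ᵥ y) i) :
    StrictlyFeasible {x | A *ᵥ x = b ∧ ∀ i, (B *ᵥ x) i ≤ d i} x₀ z := by
  obtain ⟨α, hα, -, hBα⟩ := hy
  have hB : ∀ᶠ ε : ℝ in nhdsWithin 0 (Set.Ioi 0), ∀ i, (B *ᵥ (x₀ + ε • z)) i ≤ d i := by
    refine Filter.eventually_all.mpr fun i => ?_
    have hαi := hBα i
    simp only [mulVec_add, mulVec_smul, Pi.add_apply, Pi.smul_apply, smul_eq_mul] at hαi ⊢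
    exact eventually_le_of_pos_imp_pos (hx₀.2 i) hα hαi (hBz i)
  obtain ⟨ε, hε, hBε⟩ := (eventually_mem_nhdsWithin.and hB).exists
  refine ⟨ε, hε, ?_, hBε⟩
  simp [mulVec_add, mulVec_smul, hAz, hx₀.1]

theorem conformal_circuits_same_steepness_general
    (n mA mB : ℕ) (A : Matrix (Fin mA) (Fin n) ℝ) (B : Matrix (Fin mB) (Fin n) ℝ)
    (b : Fin mA → ℝ) (d : Fin mB → ℝ) (c : Fin n → ℝ)
    (P : Set (Fin n → ℝ))
    (hP : P = {x | A.mulVec x = b ∧ ∀ i, B.mulVec x i ≤ d i})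
    (x₀ : Fin n → ℝ) (hx₀ : x₀ ∈ P)
    (y : Fin n → ℝ)
    (hyfeas : StrictlyFeasible P x₀ y)
    (hBy : B.mulVec y ≠ 0)
    (hsteepest : ∀ z : Fin n → ℝ, StrictlyFeasible P x₀ z → B.mulVec z ≠ 0 →
      c ⬝ᵥ y / (∑ i, |B.mulVec y i|) ≤ c ⬝ᵥ z / (∑ i, |B.mulVec z i|))
    (t : ℕ) (g : Fin t → (Fin n → ℝ)) (lam : Fin t → ℝ)
    (hlam : ∀ j, 0 < lam j)
    (hy : y = ∑ j, lam j • g j)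
    (hAg : ∀ j, A.mulVec (g j) = 0)
    (hBg : ∀ j, B.mulVec (g j) ≠ 0)
    (hconf : ∀ j, ∀ i, B.mulVec (g j) i * B.mulVec y i ≥ 0 ∧
      (B.mulVec y i = 0 → B.mulVec (g j) i = 0)) :
    ∀ j, c ⬝ᵥ (g j) / (∑ i, |B.mulVec (g j) i|) = c ⬝ᵥ y / (∑ i, |B.mulVec y i|) := by
  subst hP
  have hBy_sum : B *ᵥ y = ∑ k, lam k • B *ᵥ g k := by simp [hy, mulVec_sum, mulVec_smul]
  have hcy_sum : c ⬝ᵥ y = ∑ k, lam k * c ⬝ᵥ g k := by simp [hy, dotProduct_sum, dotProduct_smul]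
  have hnorm : ∑ i, |(B *ᵥ y) i| = ∑ k, lam k * ∑ i, |(B *ᵥ g k) i| := by
    rw [hBy_sum]
    exact sum_abs_sum_smul_of_signConformal _ _ (hBy_sum ▸ hconf)
  have hfeas k : StrictlyFeasible _ x₀ (g k) :=
    hyfeas.of_pos_imp_pos hx₀ (hAg k) fun _ => SignConformal.pos_of_pos (hconf k)
  refine div_eq_of_le_div_of_sum_mul_eq lam _ _ hlam (fun k => sum_abs_pos_of_ne_zero (hBg k))
    (fun k => hsteepest _ (hfeas k) (hBg k)) ?_
  rw [← hcy_sum, ← hnorm, div_mul_cancel₀ _ (sum_abs_pos_of_ne_zero hBy).ne']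

/-- If `y` is a steepest-descent augmenting direction at `x₀` with `cᵀy < 0`
and `y = ∑ⱼ λⱼ gⱼ` is a conformal decomposition with `λⱼ > 0`, `A gⱼ = 0`, `B gⱼ ≠ 0`,
then every `gⱼ` has the same steepness as `y`. -/
theorem conformal_circuits_same_steepness
    (n mA mB : ℕ) (A : Matrix (Fin mA) (Fin n) ℝ) (B : Matrix (Fin mB) (Fin n) ℝ)
    (b : Fin mA → ℝ) (d : Fin mB → ℝ) (c : Fin n → ℝ)
    (P : Set (Fin n → ℝ))
    (hP : P = {x | A.mulVec x = b ∧ ∀ i, B.mulVec x i ≤ d i})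
    (x₀ : Fin n → ℝ) (hx₀ : x₀ ∈ P)
    (y : Fin n → ℝ)
    (hyfeas : StrictlyFeasible P x₀ y)
    (hBy : B.mulVec y ≠ 0)
    (hsteepest : ∀ z : Fin n → ℝ, StrictlyFeasible P x₀ z → B.mulVec z ≠ 0 →
      c ⬝ᵥ y / (∑ i, |B.mulVec y i|) ≤ c ⬝ᵥ z / (∑ i, |B.mulVec z i|))
    (hcy : c ⬝ᵥ y < 0)
    (t : ℕ) (g : Fin t → (Fin n → ℝ)) (lam : Fin t → ℝ)
    (hlam : ∀ j, 0 < lam j)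
    (hy : y = ∑ j, lam j • g j)
    (hAg : ∀ j, A.mulVec (g j) = 0)
    (hBg : ∀ j, B.mulVec (g j) ≠ 0)
    (hconf : ∀ j, ∀ i, B.mulVec (g j) i * B.mulVec y i ≥ 0 ∧
      (B.mulVec y i = 0 → B.mulVec (g j) i = 0)) :
    ∀ j, c ⬝ᵥ (g j) / (∑ i, |B.mulVec (g j) i|) = c ⬝ᵥ y / (∑ i, |B.mulVec y i|) :=
  conformal_circuits_same_steepness_general n mA mB A B b d c P hP x₀ hx₀ y hyfeas hBy hsteepest t g
    lam hlam hy hAg hBg hconf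
end

section
/- Let P = {x ∈ ℝⁿ : Ax = b, Bx ≤ d} and c ∈ ℝⁿ, and let x₀, x₁, …, x_k ∈ P be a sequence of steepest-descent augmentations: for each i < k there exists y_i that is a steepest-descent augmenting direction at x_i (strictly feasible at x_i, By_i ≠ 0, minimizing cᵀy/‖By‖₁ over all strictly feasible y at x_i with By ≠ 0) with cᵀy_i < 0, and x_{i+1} = x_i + α_i y_i where α_i > 0 is maximal (x_i + αy_i ∉ P for all α > α_i). If all steps have the same steepness value, i.e., cᵀy_i/‖By_i‖₁ = cᵀy_0/‖By_0‖₁ for all i < k, then k ≤ dim(P), where dim(P) is the dimension of the affine hull of P. -/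
open Finset Matrix

/-- `y` is a steepest-descent augmenting direction at `x₀` with respect to `P`, `B`, `c`. -/
def IsSteepestDescentDirection {n mB : ℕ} (P : Set (Fin n → ℝ))
    (B : Matrix (Fin mB) (Fin n) ℝ) (c : Fin n → ℝ) (x₀ y : Fin n → ℝ) : Prop :=
  StrictlyFeasible P x₀ y ∧ B.mulVec y ≠ 0 ∧
    ∀ z : Fin n → ℝ, StrictlyFeasible P x₀ z → B.mulVec z ≠ 0 →
      c ⬝ᵥ y / (∑ i, |B.mulVec y i|) ≤ c ⬝ᵥ z / (∑ i, |B.mulVec z i|)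

/-- Equality in the triangle inequality for a finite sum of reals is impossible if two
terms have strictly opposite signs. -/
lemma abs_sum_ne_of_signs {s : Finset ℕ} {f : ℕ → ℝ} {a b : ℕ} (ha : a ∈ s) (hb : b ∈ s)
    (hfa : 0 < f a) (hfb : f b < 0) : |∑ m ∈ s, f m| ≠ ∑ m ∈ s, |f m| := by
  intro h
  rcases (abs_eq (Finset.sum_nonneg fun m _ => abs_nonneg (f m))).mp h with h1 | h1
  · have h2 : ∑ m ∈ s, (|f m| - f m) = 0 := by rw [Finset.sum_sub_distrib, h1]; ring
    have h3 := (Finset.sum_eq_zero_iff_of_nonneg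
      (fun m _ => sub_nonneg.mpr (le_abs_self (f m)))).mp h2 b hb
    nlinarith [abs_nonneg (f b)]
  · have h2 : ∑ m ∈ s, (|f m| + f m) = 0 := by rw [Finset.sum_add_distrib, h1]; ring
    have h3 := (Finset.sum_eq_zero_iff_of_nonneg
      (fun m _ => by linarith [neg_abs_le (f m)])).mp h2 a ha
    nlinarith [abs_nonneg (f a)]

/-- In a sequence of maximal steepest-descent augmentations in which all
steps have the same steepness value, the number of steps is at most `dim P`, the dimension
of the affine hull of `P`. -/
theorem fixed_steepness_step_bound
    (n mA mB : ℕ) (A : Matrix (Fin mA) (Fin n) ℝ) (B : Matrix (Fin mB) (Fin n) ℝ)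
    (b : Fin mA → ℝ) (d : Fin mB → ℝ) (c : Fin n → ℝ)
    (P : Set (Fin n → ℝ))
    (hP : P = {x | A.mulVec x = b ∧ ∀ i, B.mulVec x i ≤ d i})
    (k : ℕ) (x : ℕ → (Fin n → ℝ)) (y : ℕ → (Fin n → ℝ)) (α : ℕ → ℝ)
    (hxP : ∀ i ≤ k, x i ∈ P)
    (hsd : ∀ i < k, IsSteepestDescentDirection P B c (x i) (y i))
    (hcy : ∀ i < k, c ⬝ᵥ y i < 0)
    (hα : ∀ i < k, 0 < α i)
    (hstep : ∀ i < k, x (i + 1) = x i + α i • y i)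
    (hmax : ∀ i < k, ∀ α' : ℝ, α i < α' → x i + α' • y i ∉ P)
    (hsame : ∀ i < k,
      c ⬝ᵥ y i / (∑ j, |B.mulVec (y i) j|) = c ⬝ᵥ y 0 / (∑ j, |B.mulVec (y 0) j|)) :
    k ≤ Module.finrank ℝ (affineSpan ℝ P).direction := by
  classical
  rcases Nat.eq_zero_or_pos k with hk0 | hkpos
  · exact hk0 ▸ Nat.zero_le _
  -- positivity of the ℓ¹ norms
  have hNpos : ∀ i, i < k → 0 < ∑ j, |B.mulVec (y i) j| := by
    intro i hi
    have hne := (hsd i hi).2.1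
    have h0 : 0 ≤ ∑ j, |B.mulVec (y i) j| := Finset.sum_nonneg fun j _ => abs_nonneg _
    rcases h0.lt_or_eq with h | h
    · exact h
    · exfalso; apply hne; funext j
      have := (Finset.sum_eq_zero_iff_of_nonneg (fun j _ => abs_nonneg _)).mp h.symm j
        (Finset.mem_univ j)
      simpa [abs_eq_zero] using this
  set τ : ℝ := c ⬝ᵥ y 0 / (∑ j, |B.mulVec (y 0) j|) with hτdef
  have hτneg : τ < 0 := div_neg_of_neg_of_pos (hcy 0 hkpos) (hNpos 0 hkpos)
  have hcyN : ∀ i, i < k → c ⬝ᵥ y i = τ * ∑ j, |B.mulVec (y i) j| := by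
    intro i hi
    rw [← hsame i hi, div_mul_cancel₀ _ (hNpos i hi).ne']
  have hdot2 : ∀ (a e : ℝ) (u z : Fin n → ℝ),
      c ⬝ᵥ (a • u + e • z) = a * (c ⬝ᵥ u) + e * (c ⬝ᵥ z) := by
    intro a e u z
    simp only [dotProduct, Pi.add_apply, Pi.smul_apply, smul_eq_mul, mul_add,
      Finset.sum_add_distrib, Finset.mul_sum]
    congr 1 <;> exact Finset.sum_congr rfl fun i _ => by ring
  have hAy : ∀ i, i < k → A.mulVec (y i) = 0 := by
    intro i hi
    obtain ⟨a, ha, hmem⟩ := (hsd i hi).1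
    rw [hP] at hmem
    have h2 : A.mulVec (x i) = b := by
      have := hxP i hi.le; rw [hP] at this; exact this.1
    have h1 := hmem.1
    rw [Matrix.mulVec_add, Matrix.mulVec_smul, h2] at h1
    have h3 : a • A.mulVec (y i) = 0 := by
      have := congrArg (fun v => v - b) h1; simpa using this
    rcases smul_eq_zero.mp h3 with h | h
    · exact absurd h ha.ne'
    · exact h
  -- midpoint convexity of P
  have hmid : ∀ u v : Fin n → ℝ, u ∈ P → v ∈ P → (1/2 : ℝ) • (u + v) ∈ P := by
    intro u v hu hv
    rw [hP] at hu hv ⊢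
    refine ⟨?_, ?_⟩
    · rw [Matrix.mulVec_smul, Matrix.mulVec_add, hu.1, hv.1]
      funext j; simp; ring
    · intro i
      have h1 := hu.2 i; have h2 := hv.2 i
      rw [Matrix.mulVec_smul, Matrix.mulVec_add]
      simp only [Pi.smul_apply, Pi.add_apply, smul_eq_mul]
      linarith
  -- telescoping
  have htel : ∀ p q, p ≤ q → q ≤ k → x q = x p + ∑ m ∈ Finset.Ico p q, α m • y m := by
    intro p q hpq
    induction q, hpq using Nat.le_induction with
    | base => intro _; simp
    | succ q hq ih =>
      intro hq1
      have hqk : q < k := hq1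
      rw [hstep q hqk, ih hqk.le, Finset.sum_Ico_succ_top hq]
      abel
  -- the key window lemma: coordinatewise equality in the triangle inequality
  have hwin : ∀ p q, p ≤ q → q < k →
      ∃ γ : ℕ → ℝ, (∀ m ∈ Finset.Icc p q, 0 < γ m) ∧
        ∀ r, |∑ m ∈ Finset.Icc p q, γ m * B.mulVec (y m) r|
            = ∑ m ∈ Finset.Icc p q, γ m * |B.mulVec (y m) r| := by
    intro p q hpq hqk
    have hpk : p < k := lt_of_le_of_lt hpq hqk
    obtain ⟨β, hβ, hfeas⟩ := (hsd q hqk).1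
    set γ : ℕ → ℝ := fun m => if m = q then β else α m with hγ
    have hmk : ∀ m ∈ Finset.Icc p q, m < k := fun m hm =>
      lt_of_le_of_lt (Finset.mem_Icc.mp hm).2 hqk
    have hγpos : ∀ m ∈ Finset.Icc p q, 0 < γ m := by
      intro m hm
      rcases eq_or_ne m q with h | h
      · simp [hγ, h, hβ]
      · simp only [hγ, if_neg h]
        exact hα m (hmk m hm)
    set w : Fin n → ℝ := ∑ m ∈ Finset.Icc p q, γ m • y m with hw
    have hsum : x p + w = x q + β • y q := by
      have h1 : ∑ m ∈ Finset.Ico p q, γ m • y m = ∑ m ∈ Finset.Ico p q, α m • y m :=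
        Finset.sum_congr rfl (fun m hm => by
          have hne : m ≠ q := ne_of_lt (Finset.mem_Ico.mp hm).2
          simp [hγ, hne])
      rw [hw, ← Finset.Ico_insert_right hpq, Finset.sum_insert Finset.right_notMem_Ico, h1,
        htel p q hpq hqk.le]
      have : γ q = β := by simp [hγ]
      rw [this]; abel
    have hwfeas : StrictlyFeasible P (x p) w := ⟨1, one_pos, by rw [one_smul, hsum]; exact hfeas⟩
    set S : ℝ := ∑ m ∈ Finset.Icc p q, γ m * ∑ j, |B.mulVec (y m) j| with hS
    have hSpos : 0 < S := by
      refine Finset.sum_pos (fun m hm => mul_pos (hγpos m hm) (hNpos m (hmk m hm))) ?_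
      exact ⟨p, Finset.mem_Icc.mpr ⟨le_refl p, hpq⟩⟩
    have hcw : c ⬝ᵥ w = τ * S := by
      have h1 : c ⬝ᵥ w = ∑ m ∈ Finset.Icc p q, c ⬝ᵥ (γ m • y m) := by
        rw [hw]
        simp only [dotProduct, Finset.sum_apply, Finset.mul_sum]
        rw [Finset.sum_comm]
      rw [h1, hS, Finset.mul_sum]
      refine Finset.sum_congr rfl fun m hm => ?_
      rw [show c ⬝ᵥ (γ m • y m) = γ m * (c ⬝ᵥ y m) from by simp, hcyN m (hmk m hm)]
      ring
    have hBw : ∀ r, B.mulVec w r = ∑ m ∈ Finset.Icc p q, γ m * B.mulVec (y m) r := by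
      intro r
      have h1 : B.mulVec w = ∑ m ∈ Finset.Icc p q, γ m • B.mulVec (y m) := by
        rw [hw, ← Matrix.mulVecLin_apply, map_sum]
        exact Finset.sum_congr rfl fun m _ => by
          rw [LinearMap.map_smul, Matrix.mulVecLin_apply]
      rw [h1, Finset.sum_apply]
      simp
    have hle1 : ∀ r, |B.mulVec w r| ≤ ∑ m ∈ Finset.Icc p q, γ m * |B.mulVec (y m) r| := by
      intro r
      rw [hBw r]
      refine le_trans (Finset.abs_sum_le_sum_abs _ _) (le_of_eq ?_)
      exact Finset.sum_congr rfl fun m hm => by rw [abs_mul, abs_of_pos (hγpos m hm)]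
    have h2 : ∑ r, ∑ m ∈ Finset.Icc p q, γ m * |B.mulVec (y m) r| = S := by
      rw [Finset.sum_comm, hS]
      exact Finset.sum_congr rfl fun m hm => (Finset.mul_sum _ _ _).symm
    have hsumle : ∑ r, |B.mulVec w r| ≤ S := by
      calc ∑ r, |B.mulVec w r| ≤ ∑ r, ∑ m ∈ Finset.Icc p q, γ m * |B.mulVec (y m) r| :=
            Finset.sum_le_sum fun r _ => hle1 r
        _ = S := h2
    have hBwne : B.mulVec w ≠ 0 := by
      intro hBw0
      set v : Fin n → ℝ := (1/2 : ℝ) • w + (α p / 2) • y p with hv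
      have hαp := hα p hpk
      have hNp := hNpos p hpk
      have hxpv : x p + v ∈ P := by
        have h1 : x p + w ∈ P := by rw [hsum]; exact hfeas
        have h2 : x p + α p • y p ∈ P := by rw [← hstep p hpk]; exact hxP (p+1) hpk
        have h3 := hmid _ _ h1 h2
        have heq : (1/2 : ℝ) • ((x p + w) + (x p + α p • y p)) = x p + v := by
          rw [hv]; module
        rwa [heq] at h3
      have hfv : StrictlyFeasible P (x p) v := ⟨1, one_pos, by rwa [one_smul]⟩
      have hBv : B.mulVec v = (α p / 2) • B.mulVec (y p) := by
        rw [hv, Matrix.mulVec_add, Matrix.mulVec_smul, Matrix.mulVec_smul, hBw0]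
        simp
      have hBvne : B.mulVec v ≠ 0 := by
        rw [hBv]
        exact smul_ne_zero (by positivity) (hsd p hpk).2.1
      have hmin := (hsd p hpk).2.2 v hfv hBvne
      rw [hsame p hpk] at hmin
      have hNv : ∑ j, |B.mulVec v j| = (α p / 2) * ∑ j, |B.mulVec (y p) j| := by
        rw [hBv, Finset.mul_sum]
        refine Finset.sum_congr rfl fun j _ => ?_
        simp only [Pi.smul_apply, smul_eq_mul, abs_mul]
        rw [abs_of_pos (by positivity)]
      have hcv : c ⬝ᵥ v = (1/2) * (τ * S) + (α p / 2) * (τ * ∑ j, |B.mulVec (y p) j|) := by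
        rw [hv, hdot2, hcw, hcyN p hpk]
      rw [hNv] at hmin
      have h4 := (le_div_iff₀ (by positivity : (0:ℝ) < (α p / 2) * ∑ j, |B.mulVec (y p) j|)).mp hmin
      rw [hcv] at h4
      have h5 : τ * S < 0 := mul_neg_of_neg_of_pos hτneg hSpos
      nlinarith [h4, h5]
    have hNwpos : 0 < ∑ r, |B.mulVec w r| := by
      have h0 : 0 ≤ ∑ r, |B.mulVec w r| := Finset.sum_nonneg fun j _ => abs_nonneg _
      rcases h0.lt_or_eq with h | h
      · exact h
      · exfalso; apply hBwne; funext j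
        have := (Finset.sum_eq_zero_iff_of_nonneg (fun j _ => abs_nonneg _)).mp h.symm j
          (Finset.mem_univ j)
        simpa [abs_eq_zero] using this
    have hmin := (hsd p hpk).2.2 w hwfeas hBwne
    rw [hsame p hpk, hcw] at hmin
    have hSle : S ≤ ∑ r, |B.mulVec w r| := by
      have h4 := (le_div_iff₀ hNwpos).mp hmin
      nlinarith
    have hEq : ∑ r, |B.mulVec w r| = ∑ r, ∑ m ∈ Finset.Icc p q, γ m * |B.mulVec (y m) r| := by
      rw [h2]; linarith
    refine ⟨γ, hγpos, fun r => ?_⟩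
    have := ((Finset.sum_eq_sum_iff_of_le (fun r _ => hle1 r)).mp hEq) r (Finset.mem_univ r)
    rw [← hBw r]; exact this
  -- sign compatibility
  have hsign : ∀ p q r, p < k → q < k → 0 < B.mulVec (y p) r → 0 ≤ B.mulVec (y q) r := by
    intro p q r hpk hqk hpos
    by_contra hneg
    push_neg at hneg
    rcases le_total p q with h | h
    · obtain ⟨γ, hγpos, heq⟩ := hwin p q h hqk
      refine abs_sum_ne_of_signs (f := fun m => γ m * B.mulVec (y m) r)
        (Finset.mem_Icc.mpr ⟨le_refl p, h⟩) (Finset.mem_Icc.mpr ⟨h, le_refl q⟩)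
        (mul_pos (hγpos p (Finset.mem_Icc.mpr ⟨le_refl p, h⟩)) hpos)
        (mul_neg_of_pos_of_neg (hγpos q (Finset.mem_Icc.mpr ⟨h, le_refl q⟩)) hneg) ?_
      rw [heq r]
      exact Finset.sum_congr rfl fun m hm => by rw [abs_mul, abs_of_pos (hγpos m hm)]
    · obtain ⟨γ, hγpos, heq⟩ := hwin q p h hpk
      refine abs_sum_ne_of_signs (f := fun m => γ m * B.mulVec (y m) r)
        (Finset.mem_Icc.mpr ⟨h, le_refl p⟩) (Finset.mem_Icc.mpr ⟨le_refl q, h⟩)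
        (mul_pos (hγpos p (Finset.mem_Icc.mpr ⟨h, le_refl p⟩)) hpos)
        (mul_neg_of_pos_of_neg (hγpos q (Finset.mem_Icc.mpr ⟨le_refl q, h⟩)) hneg) ?_
      rw [heq r]
      exact Finset.sum_congr rfl fun m hm => by rw [abs_mul, abs_of_pos (hγpos m hm)]
  -- existence of a new tight constraint at each maximal step
  have hr : ∀ l, l < k → ∃ r, 0 < B.mulVec (y l) r ∧ B.mulVec (x (l+1)) r = d r := by
    intro l hl
    by_contra hcon
    push_neg at hcon
    have hx1 : x (l+1) ∈ P := hxP (l+1) hl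
    rw [hP] at hx1
    have hslack : ∀ r, 0 < B.mulVec (y l) r → B.mulVec (x (l+1)) r < d r :=
      fun r h => lt_of_le_of_ne (hx1.2 r) (hcon r h)
    haveI hmBne : Nonempty (Fin mB) := by
      by_contra he
      apply (hsd l hl).2.1
      funext r
      exact (he ⟨r⟩).elim
    set f : Fin mB → ℝ := fun r => if 0 < B.mulVec (y l) r
      then (d r - B.mulVec (x (l+1)) r) / B.mulVec (y l) r else 1 with hf
    set ε : ℝ := Finset.univ.inf' Finset.univ_nonempty f with hε
    have hfr : ∀ r, 0 < f r := by
      intro r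
      by_cases h : 0 < B.mulVec (y l) r
      · have hfr1 : f r = (d r - B.mulVec (x (l+1)) r) / B.mulVec (y l) r := by simp [hf, h]
        rw [hfr1]
        exact div_pos (sub_pos.mpr (hslack r h)) h
      · have hfr1 : f r = 1 := by simp [hf, h]
        rw [hfr1]
        exact one_pos
    have hεpos : 0 < ε := by
      rw [hε, Finset.lt_inf'_iff]
      exact fun r _ => hfr r
    have hstepB : ∀ r, B.mulVec (x (l+1)) r = B.mulVec (x l) r + α l * B.mulVec (y l) r := by
      intro r
      rw [hstep l hl, Matrix.mulVec_add, Matrix.mulVec_smul]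
      simp
    have hmem : x l + (α l + ε) • y l ∈ P := by
      rw [hP]
      refine ⟨?_, ?_⟩
      · rw [Matrix.mulVec_add, Matrix.mulVec_smul, hAy l hl]
        have : A.mulVec (x l) = b := by
          have := hxP l hl.le; rw [hP] at this; exact this.1
        simp [this]
      · intro r
        have hBr : B.mulVec (x l + (α l + ε) • y l) r
            = B.mulVec (x (l+1)) r + ε * B.mulVec (y l) r := by
          rw [Matrix.mulVec_add, Matrix.mulVec_smul, hstepB r]
          simp only [Pi.add_apply, Pi.smul_apply, smul_eq_mul]
          ring
        rw [hBr]
        by_cases h : 0 < B.mulVec (y l) r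
        · have hεle : ε ≤ f r := Finset.inf'_le f (Finset.mem_univ r)
          have hfr1 : f r = (d r - B.mulVec (x (l+1)) r) / B.mulVec (y l) r := by simp [hf, h]
          rw [hfr1] at hεle
          have := (le_div_iff₀ h).mp hεle
          linarith
        · push_neg at h
          have : ε * B.mulVec (y l) r ≤ 0 := mul_nonpos_of_nonneg_of_nonpos hεpos.le h
          linarith [hx1.2 r]
    exact hmax l hl (α l + ε) (by linarith) hmem
  choose r hr1 hr2 using hr
  -- tightness propagates forward
  have htight : ∀ l (hl : l < k), ∀ m, l < m → m ≤ k →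
      B.mulVec (x m) (r l hl) = d (r l hl) := by
    intro l hl m hlm
    induction m, hlm using Nat.le_induction with
    | base => intro _; exact hr2 l hl
    | succ m hm ih =>
      intro hm1k
      have hmk : m < k := lt_of_lt_of_le (Nat.lt_succ_self m) hm1k
      have ht := ih hmk.le
      have hx1 : x (m+1) ∈ P := hxP (m+1) hm1k
      rw [hP] at hx1
      have hle := hx1.2 (r l hl)
      have hstepr : B.mulVec (x (m+1)) (r l hl)
          = B.mulVec (x m) (r l hl) + α m * B.mulVec (y m) (r l hl) := by
        rw [hstep m hmk, Matrix.mulVec_add, Matrix.mulVec_smul]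
        simp
      have hge := hsign l m (r l hl) hl hmk (hr1 l hl)
      have hαm := hα m hmk
      nlinarith
  have hzero : ∀ l (hl : l < k), ∀ m, l < m → m < k →
      B.mulVec (y m) (r l hl) = 0 := by
    intro l hl m hlm hmk
    have h1 := htight l hl m hlm hmk.le
    have h2 := htight l hl (m+1) (hlm.trans (Nat.lt_succ_self m)) hmk
    have hstepr : B.mulVec (x (m+1)) (r l hl)
        = B.mulVec (x m) (r l hl) + α m * B.mulVec (y m) (r l hl) := by
      rw [hstep m hmk, Matrix.mulVec_add, Matrix.mulVec_smul]
      simp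
    have hαm := hα m hmk
    have h3 : α m * B.mulVec (y m) (r l hl) = 0 := by linarith
    rcases mul_eq_zero.mp h3 with h | h
    · exact absurd h hαm.ne'
    · exact h
  -- linear independence
  have hlin : LinearIndependent ℝ (fun i : Fin k => y i) := by
    rw [linearIndependent_iff']
    intro s g hsum0 i hi
    have key : ∀ N : ℕ, ∀ j ∈ s, (j : ℕ) < N → g j = 0 := by
      intro N
      induction N with
      | zero => intro j _ hj; omega
      | succ N ih =>
        intro j hj hjN
        rcases Nat.lt_or_ge (j : ℕ) N with h | h
        · exact ih j hj h
        have hjk : (j : ℕ) < k := j.2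
        have h0 : ∑ m ∈ s, g m * B.mulVec (y ↑m) (r (j : ℕ) hjk) = 0 := by
          have hsum1 : B.mulVec (∑ m ∈ s, g m • y (↑m : ℕ)) = 0 := by
            rw [hsum0]; exact Matrix.mulVec_zero B
          rw [← Matrix.mulVecLin_apply, map_sum] at hsum1
          have hcast := congrFun hsum1 (r (j : ℕ) hjk)
          rw [Finset.sum_apply] at hcast
          simpa [Matrix.mulVecLin_apply, Matrix.mulVec_smul, Pi.smul_apply, smul_eq_mul]
            using hcast
        have hsingle : ∀ m ∈ s, m ≠ j → g m * B.mulVec (y ↑m) (r (j : ℕ) hjk) = 0 := by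
          intro m hm hne
          rcases lt_trichotomy (m : ℕ) (j : ℕ) with h' | h' | h'
          · rw [ih m hm (by omega), zero_mul]
          · exact absurd (Fin.ext h') hne
          · rw [hzero (j : ℕ) hjk (m : ℕ) h' m.2, mul_zero]
        have hs := Finset.sum_eq_single_of_mem j hj hsingle
        rw [hs] at h0
        rcases mul_eq_zero.mp h0 with h' | h'
        · exact h'
        · exact absurd h' (hr1 (j : ℕ) hjk).ne'
    exact key k i hi i.2
  -- the directions lie in the direction space of the affine hull
  have hmemD : ∀ i : Fin k, y i ∈ (affineSpan ℝ P).direction := by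
    intro i
    have h1 : x ((i : ℕ)+1) ∈ affineSpan ℝ P := mem_affineSpan ℝ (hxP ((i : ℕ)+1) i.2)
    have h2 : x i ∈ affineSpan ℝ P := mem_affineSpan ℝ (hxP i i.2.le)
    have h3 := AffineSubspace.vsub_mem_direction h1 h2
    have h4 : x ((i : ℕ)+1) -ᵥ x (i : ℕ) = α i • y i := by
      rw [hstep i i.2, vsub_eq_sub]
      abel
    rw [h4] at h3
    have h5 := Submodule.smul_mem _ (α (i : ℕ))⁻¹ h3
    rwa [inv_smul_smul₀ (hα i i.2).ne'] at h5
  let v' : Fin k → (affineSpan ℝ P).direction := fun i => ⟨y i, hmemD i⟩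
  have hlin' : LinearIndependent ℝ v' := by
    have hcomp : (fun i : Fin k => y (i : ℕ))
        = ((affineSpan ℝ P).direction.subtype) ∘ v' := rfl
    rw [hcomp] at hlin
    exact LinearIndependent.of_comp _ hlin
  simpa using hlin'.fintype_card_le_finrank
end

section
/- (Theorem 1) Let P = {x ∈ ℝⁿ : Ax = b, Bx ≤ d} and c ∈ ℝⁿ. Suppose the set of steepness values of circuits, S = {cᵀg/‖Bg‖₁ : g a circuit of P}, is finite. Let x₀, x₁, …, x_k ∈ P be a sequence of steepest-descent augmentations: for each i < k there exists y_i that is a steepest-descent augmenting direction at x_i (strictly feasible at x_i, By_i ≠ 0, minimizing cᵀy/‖By‖₁ over all strictly feasible y at x_i with By ≠ 0) with cᵀy_i < 0, and x_{i+1} = x_i + α_i y_i where α_i > 0 is maximal (x_i + αy_i ∉ P for all α > α_i). Then k ≤ dim(P) · |S|, where dim(P) is the dimension of the affine hull of P. -/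
/-!
Write `μ i` for the steepness of `y i`. A circuit moved along `ker A ∩ ker B` stays a circuit, so
finitely many circuit steepnesses force `c` to vanish on that space. Splitting a sign-conformal
circuit off `y i` then shows `μ i ∈ S`. Comparing `y i` with the combined move `x j - x i`, which
is feasible at `x i`, shows that `μ` is nondecreasing and that along a stretch of constant
steepness the moves never cancel in a coordinate of `B`. So a constraint made tight by a maximal
step stays tight for the rest of its stretch, and the directions of equal steepness form a
triangular, hence linearly independent, family in the direction space of `P`: at most `dim P`
steps for each value in `S`.
-/

open Finset Matrix

/-- `g` is a circuit of the polyhedron `{x : A x = b, B x ≤ d}`: it lies in `ker A`, has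
`B g ≠ 0`, and the support of `B g` is inclusion-minimal among the supports of `B x` over
all nonzero `x ∈ ker A` (with `B x ≠ 0`). -/
def IsCircuit {n mA mB : ℕ} (A : Matrix (Fin mA) (Fin n) ℝ)
    (B : Matrix (Fin mB) (Fin n) ℝ) (g : Fin n → ℝ) : Prop :=
  A.mulVec g = 0 ∧ B.mulVec g ≠ 0 ∧
    ∀ x : Fin n → ℝ, A.mulVec x = 0 → B.mulVec x ≠ 0 →
      {i | B.mulVec x i ≠ 0} ⊆ {i | B.mulVec g i ≠ 0} →
      {i | B.mulVec x i ≠ 0} = {i | B.mulVec g i ≠ 0}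

theorem nonneg_of_abs_sum_eq_sum_abs {κ : Type*} {s : Finset κ} {a : κ → ℝ}
    (h : |∑ p ∈ s, a p| = ∑ p ∈ s, |a p|) {p q : κ} (hp : p ∈ s) (hq : q ∈ s)
    (hpos : 0 < a p) : 0 ≤ a q := by
  rcases (abs_eq (Finset.sum_nonneg fun p _ => abs_nonneg (a p))).1 h with hsum | hsum
  · have hzero : ∑ p ∈ s, (|a p| - a p) = 0 := by rw [Finset.sum_sub_distrib, hsum, sub_self]
    have := (Finset.sum_eq_zero_iff_of_nonneg fun p _ => sub_nonneg.2 (le_abs_self (a p))).1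
      hzero q hq
    linarith [abs_nonneg (a q)]
  · have hzero : ∑ p ∈ s, (|a p| + a p) = 0 := by rw [Finset.sum_add_distrib, hsum, add_neg_cancel]
    have := (Finset.sum_eq_zero_iff_of_nonneg fun p _ => by linarith [neg_abs_le (a p)]).1
      hzero p hp
    linarith [abs_nonneg (a p)]

section L1

variable {ι : Type*} [Fintype ι]

def l1norm (u : ι → ℝ) : ℝ := ∑ i, |u i|

@[simp]
theorem l1norm_zero : l1norm (0 : ι → ℝ) = 0 := by simp [l1norm]

theorem l1norm_pos {u : ι → ℝ} (hu : u ≠ 0) : 0 < l1norm u := by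
  obtain ⟨i, hi⟩ := Function.ne_iff.1 hu
  exact (abs_pos.2 hi).trans_le (Finset.single_le_sum (fun j _ => abs_nonneg (u j))
    (Finset.mem_univ i))

theorem l1norm_smul (t : ℝ) (u : ι → ℝ) : l1norm (t • u) = |t| * l1norm u := by
  simp [l1norm, abs_mul, Finset.mul_sum]

theorem l1norm_add_le (u v : ι → ℝ) : l1norm (u + v) ≤ l1norm u + l1norm v := by
  rw [l1norm, l1norm, l1norm, ← Finset.sum_add_distrib]
  exact Finset.sum_le_sum fun i _ => abs_add_le (u i) (v i)

theorem nonneg_of_sum_l1norm_le_l1norm_sum {κ : Type*} {s : Finset κ} {u : κ → ι → ℝ}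
    (h : ∑ p ∈ s, l1norm (u p) ≤ l1norm (∑ p ∈ s, u p)) {p q : κ} (hp : p ∈ s) (hq : q ∈ s)
    {i : ι} (hpos : 0 < u p i) : 0 ≤ u q i := by
  have htri : ∀ j ∈ Finset.univ, |∑ p ∈ s, u p j| ≤ ∑ p ∈ s, |u p j| :=
    fun j _ => Finset.abs_sum_le_sum_abs _ _
  have hle : ∑ j, ∑ p ∈ s, |u p j| ≤ ∑ j, |∑ p ∈ s, u p j| := by
    simpa [l1norm, Finset.sum_apply, Finset.sum_comm (s := s)] using h
  have hcoord := (Finset.sum_eq_sum_iff_of_le htri).1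
    (le_antisymm (Finset.sum_le_sum htri) hle) i (Finset.mem_univ i)
  exact nonneg_of_abs_sum_eq_sum_abs hcoord hp hq hpos

end L1

section SignConformal

variable {ι : Type*}

def IsSignConformal (w u : ι → ℝ) : Prop := ∀ i, w i ≠ 0 → 0 < w i * u i

namespace IsSignConformal

variable {w u v : ι → ℝ}

theorem refl (u : ι → ℝ) : IsSignConformal u u := fun _ hi => mul_self_pos.2 hi

theorem ne_zero (h : IsSignConformal w u) {i : ι} (hi : w i ≠ 0) : u i ≠ 0 := by
  intro hu
  simpa [hu] using h i hi

theorem support_subset (h : IsSignConformal w u) : Function.support w ⊆ Function.support u :=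
  fun _ hi => h.ne_zero hi

theorem pos_of_pos (h : IsSignConformal w u) {i : ι} (hi : 0 < w i) : 0 < u i :=
  pos_of_mul_pos_right (h i hi.ne') hi.le

theorem nonneg_of_nonneg (h : IsSignConformal w u) {i : ι} (hi : 0 ≤ u i) : 0 ≤ w i := by
  by_contra hw
  nlinarith [h i (by linarith)]

theorem nonpos_of_nonpos (h : IsSignConformal w u) {i : ι} (hi : u i ≤ 0) : w i ≤ 0 := by
  by_contra hw
  nlinarith [h i (by linarith)]

theorem trans (hwv : IsSignConformal w v) (hvu : IsSignConformal v u) : IsSignConformal w u := by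
  intro i hi
  have hv := hwv i hi
  have hvu' := hvu i (hwv.ne_zero hi)
  nlinarith [mul_pos hv hvu', sq_nonneg (v i)]

theorem smul (h : IsSignConformal w u) {t : ℝ} (ht : 0 < t) : IsSignConformal (t • w) u := by
  intro i hi
  rw [Pi.smul_apply, smul_eq_mul, mul_assoc]
  exact mul_pos ht (h i (right_ne_zero_of_mul hi))

end IsSignConformal

/-- The witness `t` is the ratio `u i / z i` of least absolute value. -/
theorem exists_sub_smul_isSignConformal {u z : ι → ℝ} [Fintype ι] (hz : z ≠ 0)
    (hsub : Function.support z ⊆ Function.support u) :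
    ∃ t : ℝ, ∃ i, u i ≠ 0 ∧ u i = t * z i ∧ IsSignConformal (u - t • z) u := by
  classical
  obtain ⟨j, hj⟩ := Function.ne_iff.1 hz
  obtain ⟨i, hi, hmin⟩ := Finset.exists_min_image (Finset.univ.filter fun i => z i ≠ 0)
    (fun i => |u i / z i|) ⟨j, by simpa using hj⟩
  have hzi : z i ≠ 0 := (Finset.mem_filter.1 hi).2
  refine ⟨u i / z i, i, hsub hzi, by field_simp, fun l hl => ?_⟩
  simp only [Pi.sub_apply, Pi.smul_apply, smul_eq_mul] at hl ⊢
  by_cases hzl : z l = 0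
  · simp only [hzl, mul_zero, sub_zero] at hl ⊢
    exact mul_self_pos.2 hl
  set t := u i / z i
  set r := u l / z l
  have hul : u l = r * z l := by simp [r, hzl]
  have htr : |t| ≤ |r| := hmin l (by simpa using hzl)
  have hr : r ≠ 0 := div_ne_zero (hsub hzl) hzl
  have hrt : r ≠ t := fun h => hl (by rw [hul, h, sub_self])
  have hprod : 0 < r * (r - t) := by
    have : t * r ≤ r * r := by
      calc t * r ≤ |t| * |r| := by rw [← abs_mul]; exact le_abs_self _
        _ ≤ |r| * |r| := by gcongr
        _ = r * r := abs_mul_abs_self r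
    refine lt_of_le_of_ne (by nlinarith) ?_
    exact (mul_ne_zero hr (sub_ne_zero.2 hrt)).symm
  rw [hul]
  nlinarith [mul_pos hprod (mul_self_pos.2 hzl)]

end SignConformal

theorem l1norm_eq_add_of_isSignConformal {ι : Type*} [Fintype ι] {w u : ι → ℝ}
    (hw : IsSignConformal w u) (hw' : IsSignConformal (u - w) u) :
    l1norm u = l1norm w + l1norm (u - w) := by
  rw [l1norm, l1norm, l1norm, ← Finset.sum_add_distrib]
  refine Finset.sum_congr rfl fun i _ => ?_
  have key := (abs_add_eq_add_abs_iff (w i) (u i - w i)).2 ?_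
  · rwa [add_sub_cancel] at key
  rcases le_total 0 (u i) with hu | hu
  · exact Or.inl ⟨hw.nonneg_of_nonneg hu, hw'.nonneg_of_nonneg hu⟩
  · exact Or.inr ⟨hw.nonpos_of_nonpos hu, hw'.nonpos_of_nonpos hu⟩

section Circuit

variable {n mA mB : ℕ} {A : Matrix (Fin mA) (Fin n) ℝ} {B : Matrix (Fin mB) (Fin n) ℝ}

theorem exists_isCircuit_isSignConformal {y : Fin n → ℝ} (hA : A *ᵥ y = 0) (hB : B *ᵥ y ≠ 0) :
    ∃ g, IsCircuit A B g ∧ IsSignConformal (B *ᵥ g) (B *ᵥ y) := by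
  induction hN : (Function.support (B *ᵥ y)).ncard using Nat.strong_induction_on
    generalizing y with
  | _ N ih =>
  by_cases hy : IsCircuit A B y
  · exact ⟨y, hy, .refl _⟩
  obtain ⟨z, hAz, hBz, hsub, hne⟩ : ∃ z, A *ᵥ z = 0 ∧ B *ᵥ z ≠ 0 ∧
      Function.support (B *ᵥ z) ⊆ Function.support (B *ᵥ y) ∧
      Function.support (B *ᵥ z) ≠ Function.support (B *ᵥ y) := by
    by_contra! h
    exact hy ⟨hA, hB, h⟩
  obtain ⟨t, i, hui, huti, hconf⟩ := exists_sub_smul_isSignConformal hBz hsub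
  have hB' : B *ᵥ (y - t • z) = B *ᵥ y - t • B *ᵥ z := by rw [mulVec_sub, mulVec_smul]
  have hA' : A *ᵥ (y - t • z) = 0 := by simp [mulVec_sub, mulVec_smul, hA, hAz]
  have hne' : B *ᵥ (y - t • z) ≠ 0 := by
    rw [hB', sub_ne_zero]
    intro h
    exact hne (hsub.antisymm (h ▸ Function.support_const_smul_subset t _))
  have hlt : (Function.support (B *ᵥ (y - t • z))).ncard < N := by
    rw [← hN, hB']
    refine Set.ncard_lt_ncard (hconf.support_subset.ssubset_of_not_subset fun h => ?_)
    exact h hui (by simp [huti])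
  obtain ⟨g, hg, hg'⟩ := ih _ hlt hA' hne' rfl
  exact ⟨g, hg, hg'.trans (hB' ▸ hconf)⟩

end Circuit

section Polyhedron

open Filter Topology

variable {n mA mB : ℕ} {A : Matrix (Fin mA) (Fin n) ℝ} {B : Matrix (Fin mB) (Fin n) ℝ}
  {b : Fin mA → ℝ} {d : Fin mB → ℝ} {c : Fin n → ℝ}

def polyhedron (A : Matrix (Fin mA) (Fin n) ℝ) (B : Matrix (Fin mB) (Fin n) ℝ)
    (b : Fin mA → ℝ) (d : Fin mB → ℝ) : Set (Fin n → ℝ) :=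
  {x | A *ᵥ x = b ∧ ∀ i, (B *ᵥ x) i ≤ d i}

noncomputable def steepness (B : Matrix (Fin mB) (Fin n) ℝ) (c y : Fin n → ℝ) : ℝ :=
  c ⬝ᵥ y / l1norm (B *ᵥ y)

def circuitSteepnesses (A : Matrix (Fin mA) (Fin n) ℝ) (B : Matrix (Fin mB) (Fin n) ℝ)
    (c : Fin n → ℝ) : Set ℝ :=
  {s | ∃ g, IsCircuit A B g ∧ s = steepness B c g}

theorem steepness_mul_l1norm {y : Fin n → ℝ} (hy : B *ᵥ y ≠ 0) :
    steepness B c y * l1norm (B *ᵥ y) = c ⬝ᵥ y :=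
  div_mul_cancel₀ _ (l1norm_pos hy).ne'

theorem strictlyFeasible_polyhedron_iff {x₀ y : Fin n → ℝ} (hx₀ : x₀ ∈ polyhedron A B b d) :
    StrictlyFeasible (polyhedron A B b d) x₀ y ↔
      A *ᵥ y = 0 ∧ ∀ i, 0 < (B *ᵥ y) i → (B *ᵥ x₀) i < d i := by
  constructor
  · rintro ⟨a, ha, hAa, hBa⟩
    simp only [mulVec_add, mulVec_smul, hx₀.1, add_eq_left, Pi.add_apply, Pi.smul_apply,
      smul_eq_mul] at hAa hBa
    refine ⟨(smul_eq_zero.1 hAa).resolve_left ha.ne', fun i hi => ?_⟩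
    linarith [hBa i, mul_pos ha hi]
  · rintro ⟨hA, hslack⟩
    have hev : ∀ i, ∀ᶠ a in 𝓝[>] (0 : ℝ), (B *ᵥ x₀) i + a * (B *ᵥ y) i ≤ d i := by
      intro i
      rcases lt_or_ge 0 ((B *ᵥ y) i) with hi | hi
      · have hlim : Tendsto (fun a : ℝ => (B *ᵥ x₀) i + a * (B *ᵥ y) i) (𝓝[>] 0)
            (𝓝 ((B *ᵥ x₀) i)) := by
          refine tendsto_nhdsWithin_of_tendsto_nhds ?_
          simpa using (continuous_const.add (continuous_id.mul continuous_const)).tendsto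
            (0 : ℝ) (f := fun a : ℝ => (B *ᵥ x₀) i + a * (B *ᵥ y) i)
        exact (hlim.eventually_lt_const (hslack i hi)).mono fun _ => le_of_lt
      · filter_upwards [self_mem_nhdsWithin] with a (ha : 0 < a)
        nlinarith [hx₀.2 i]
    obtain ⟨a, hBa, ha⟩ := ((eventually_all.2 hev).and self_mem_nhdsWithin).exists
    exact ⟨a, ha, by simp [mulVec_add, mulVec_smul, hx₀.1, hA],
      fun i => by simpa [mulVec_add, mulVec_smul] using hBa i⟩

theorem StrictlyFeasible.of_isSignConformal {x₀ y w : Fin n → ℝ}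
    (hx₀ : x₀ ∈ polyhedron A B b d) (hy : StrictlyFeasible (polyhedron A B b d) x₀ y)
    (hAw : A *ᵥ w = 0) (hw : IsSignConformal (B *ᵥ w) (B *ᵥ y)) :
    StrictlyFeasible (polyhedron A B b d) x₀ w :=
  (strictlyFeasible_polyhedron_iff hx₀).2
    ⟨hAw, fun i hi => ((strictlyFeasible_polyhedron_iff hx₀).1 hy).2 i (hw.pos_of_pos hi)⟩

theorem IsCircuit.add_of_mulVec_eq_zero {g r : Fin n → ℝ} (hg : IsCircuit A B g)
    (hAr : A *ᵥ r = 0) (hBr : B *ᵥ r = 0) : IsCircuit A B (g + r) := by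
  have hB : B *ᵥ (g + r) = B *ᵥ g := by rw [mulVec_add, hBr, add_zero]
  refine ⟨by rw [mulVec_add, hg.1, hAr, add_zero], ?_, ?_⟩ <;> rw [hB]
  exacts [hg.2.1, hg.2.2]

/-- A circuit stays a circuit when moved along `ker A ∩ ker B`, and its steepness then moves
affinely with slope proportional to `c ⬝ᵥ r`. -/
theorem dotProduct_eq_zero_of_circuitSteepnesses_finite (hfin : (circuitSteepnesses A B c).Finite)
    {g r : Fin n → ℝ} (hg : IsCircuit A B g) (hAr : A *ᵥ r = 0) (hBr : B *ᵥ r = 0) :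
    c ⬝ᵥ r = 0 := by
  by_contra hcr
  refine Set.infinite_of_injective_forall_mem (f := fun t : ℝ => steepness B c (g + t • r))
    (fun t₁ t₂ h => ?_) (fun t => ?_) hfin
  · simp only [steepness, mulVec_add, mulVec_smul, hBr, smul_zero, add_zero, dotProduct_add,
      dotProduct_smul, smul_eq_mul, div_left_inj' (l1norm_pos hg.2.1).ne', add_right_inj] at h
    exact mul_right_cancel₀ hcr h
  · exact ⟨g + t • r, hg.add_of_mulVec_eq_zero (by simp [mulVec_smul, hAr])
      (by simp [mulVec_smul, hBr]), rfl⟩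

theorem IsSteepestDescentDirection.steepness_mul_le {x₀ y z : Fin n → ℝ}
    (hx₀ : x₀ ∈ polyhedron A B b d)
    (hy : IsSteepestDescentDirection (polyhedron A B b d) B c x₀ y)
    (horth : ∀ r, A *ᵥ r = 0 → B *ᵥ r = 0 → c ⬝ᵥ r = 0)
    (hz : StrictlyFeasible (polyhedron A B b d) x₀ z) :
    steepness B c y * l1norm (B *ᵥ z) ≤ c ⬝ᵥ z := by
  by_cases hBz : B *ᵥ z = 0
  · rw [hBz, l1norm_zero, mul_zero, horth z ((strictlyFeasible_polyhedron_iff hx₀).1 hz).1 hBz]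
  · exact (le_div_iff₀ (l1norm_pos hBz)).1 (hy.2.2 z hz hBz)

/-- Split off from `y` the largest multiple `t • g` of a sign-conformal circuit that keeps the
rest `y - t • g` sign-conformal: the steepness of `y` is then a weighted mean of those of `g`
and `y - t • g`, both at least the minimum, so `g` attains it. -/
theorem IsSteepestDescentDirection.exists_isCircuit_steepness_eq {x₀ y : Fin n → ℝ}
    (hx₀ : x₀ ∈ polyhedron A B b d)
    (hy : IsSteepestDescentDirection (polyhedron A B b d) B c x₀ y)
    (horth : ∀ r, A *ᵥ r = 0 → B *ᵥ r = 0 → c ⬝ᵥ r = 0) :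
    ∃ g, IsCircuit A B g ∧ steepness B c g = steepness B c y := by
  have hAy := ((strictlyFeasible_polyhedron_iff hx₀).1 hy.1).1
  obtain ⟨g, hg, hconf⟩ := exists_isCircuit_isSignConformal hAy hy.2.1
  obtain ⟨t, i, hui, huti, hconf'⟩ := exists_sub_smul_isSignConformal hg.2.1 hconf.support_subset
  have ht : 0 < t := by
    have := hconf i (right_ne_zero_of_mul (huti ▸ hui))
    rw [huti] at this
    nlinarith [mul_self_nonneg ((B *ᵥ g) i)]
  have hB' : B *ᵥ (y - t • g) = B *ᵥ y - t • B *ᵥ g := by rw [mulVec_sub, mulVec_smul]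
  have hA' : A *ᵥ (y - t • g) = 0 := by simp [mulVec_sub, mulVec_smul, hAy, hg.1]
  set μ := steepness B c y
  have hg_le := hy.steepness_mul_le hx₀ horth (hy.1.of_isSignConformal hx₀ hg.1 hconf)
  have hrest_le := hy.steepness_mul_le hx₀ horth
    (hy.1.of_isSignConformal hx₀ hA' (hB' ▸ hconf'))
  have hnorm : l1norm (B *ᵥ y) = t * l1norm (B *ᵥ g) + l1norm (B *ᵥ (y - t • g)) := by
    rw [hB', l1norm_eq_add_of_isSignConformal (hconf.smul ht) (by simpa using hconf'),
      l1norm_smul, abs_of_pos ht]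
  have hcost : c ⬝ᵥ y = t * c ⬝ᵥ g + c ⬝ᵥ (y - t • g) := by
    rw [dotProduct_sub, dotProduct_smul, smul_eq_mul]; ring
  have hμ : μ * l1norm (B *ᵥ y) = c ⬝ᵥ y := steepness_mul_l1norm hy.2.1
  have hg_eq : μ * l1norm (B *ᵥ g) = c ⬝ᵥ g := by
    rw [hnorm, hcost] at hμ
    nlinarith
  exact ⟨g, hg, (div_eq_iff (l1norm_pos hg.2.1).ne').2 hg_eq.symm⟩

end Polyhedron

theorem linearIndependent_of_triangular {R V ι : Type*} [CommRing R] [NoZeroDivisors R]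
    [AddCommGroup V] [Module R V] [LinearOrder ι] [Fintype ι] {v : ι → V}
    (f : ι → V →ₗ[R] R) (hdiag : ∀ i, f i (v i) ≠ 0) (htri : ∀ i j, i < j → f i (v j) = 0) :
    LinearIndependent R v := by
  rw [Fintype.linearIndependent_iff]
  intro g hg i
  induction i using WellFoundedLT.induction with
  | _ i ih =>
  have h := congrArg (f i) hg
  rw [map_sum, map_zero, Finset.sum_eq_single i] at h
  · simpa [hdiag i] using h
  · intro j _ hji
    rcases hji.lt_or_gt with hj | hj
    · simp [ih j hj]
    · simp [htri i j hj]
  · simp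

structure IsSteepestDescentRun {n mB : ℕ} (P : Set (Fin n → ℝ))
    (B : Matrix (Fin mB) (Fin n) ℝ) (c : Fin n → ℝ) (k : ℕ) (x y : ℕ → Fin n → ℝ)
    (α : ℕ → ℝ) : Prop where
  mem : ∀ i ≤ k, x i ∈ P
  steepest : ∀ i < k, IsSteepestDescentDirection P B c (x i) (y i)
  descent : ∀ i < k, c ⬝ᵥ y i < 0
  pos : ∀ i < k, 0 < α i
  step : ∀ i < k, x (i + 1) = x i + α i • y i

namespace IsSteepestDescentRun

variable {n mA mB : ℕ} {A : Matrix (Fin mA) (Fin n) ℝ} {B : Matrix (Fin mB) (Fin n) ℝ}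
  {b : Fin mA → ℝ} {d : Fin mB → ℝ} {c : Fin n → ℝ} {P : Set (Fin n → ℝ)} {k : ℕ}
  {x y : ℕ → Fin n → ℝ} {α : ℕ → ℝ} {i j : ℕ}

theorem mem_direction (h : IsSteepestDescentRun P B c k x y α) (hi : i < k) :
    y i ∈ (affineSpan ℝ P).direction := by
  have hsub : x (i + 1) -ᵥ x i ∈ (affineSpan ℝ P).direction :=
    AffineSubspace.vsub_mem_direction (subset_affineSpan ℝ P (h.mem _ hi))
      (subset_affineSpan ℝ P (h.mem _ hi.le))
  rw [vsub_eq_sub, h.step i hi, add_sub_cancel_left] at hsub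
  simpa [(h.pos i hi).ne'] using Submodule.smul_mem _ (α i)⁻¹ hsub

theorem sub_eq_sum (h : IsSteepestDescentRun P B c k x y α) (hij : i ≤ j) (hjk : j ≤ k) :
    x j - x i = ∑ p ∈ Finset.Ico i j, α p • y p := by
  rw [← Finset.sum_Ico_sub x hij]
  refine Finset.sum_congr rfl fun p hp => ?_
  rw [h.step p (by grind), add_sub_cancel_left]

theorem steepness_neg (h : IsSteepestDescentRun P B c k x y α) (hi : i < k) :
    steepness B c (y i) < 0 :=
  div_neg_of_neg_of_pos (h.descent i hi) (l1norm_pos (h.steepest i hi).2.1)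

theorem steepness_le_succ (h : IsSteepestDescentRun (polyhedron A B b d) B c k x y α)
    (horth : ∀ r, A *ᵥ r = 0 → B *ᵥ r = 0 → c ⬝ᵥ r = 0) (hi : i + 1 < k) :
    steepness B c (y i) ≤ steepness B c (y (i + 1)) := by
  have hik : i < k := by omega
  set z := α i • y i + α (i + 1) • y (i + 1)
  have hz : StrictlyFeasible (polyhedron A B b d) (x i) z := ⟨1, one_pos, by
    rw [one_smul, ← add_assoc, ← h.step i hik, ← h.step (i + 1) hi]
    exact h.mem _ hi⟩
  have hle := (h.steepest i hik).steepness_mul_le (h.mem i hik.le) horth hz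
  have hα₀ := h.pos i hik
  have hα₁ := h.pos (i + 1) hi
  have htri : l1norm (B *ᵥ z) ≤
      α i * l1norm (B *ᵥ y i) + α (i + 1) * l1norm (B *ᵥ y (i + 1)) := by
    calc l1norm (B *ᵥ z) ≤ l1norm (α i • B *ᵥ y i) + l1norm (α (i + 1) • B *ᵥ y (i + 1)) := by
          rw [mulVec_add, mulVec_smul, mulVec_smul]
          exact l1norm_add_le _ _
      _ = _ := by rw [l1norm_smul, l1norm_smul, abs_of_pos hα₀, abs_of_pos hα₁]
  have hcost : c ⬝ᵥ z = α i * c ⬝ᵥ y i + α (i + 1) * c ⬝ᵥ y (i + 1) := by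
    simp only [z, dotProduct_add, dotProduct_smul, smul_eq_mul]
  have hμ := steepness_mul_l1norm (c := c) (h.steepest i hik).2.1
  have hμneg := h.steepness_neg hik
  have key : α (i + 1) * (steepness B c (y i) * l1norm (B *ᵥ y (i + 1))) ≤
      α (i + 1) * c ⬝ᵥ y (i + 1) := by
    nlinarith [mul_le_mul_of_nonpos_left htri hμneg.le]
  exact (le_div_iff₀ (l1norm_pos (h.steepest (i + 1) hi).2.1)).2 (le_of_mul_le_mul_left key hα₁)

theorem steepness_mono (h : IsSteepestDescentRun (polyhedron A B b d) B c k x y α)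
    (horth : ∀ r, A *ᵥ r = 0 → B *ᵥ r = 0 → c ⬝ᵥ r = 0) (hij : i ≤ j) (hjk : j < k) :
    steepness B c (y i) ≤ steepness B c (y j) := by
  induction j, hij using Nat.le_induction with
  | base => exact le_rfl
  | succ j _ ih => exact (ih (by omega)).trans (h.steepness_le_succ horth hjk)

/-- Along a stretch of constant steepness the moves `α p • y p` add up to `x j - x i` without
cancellation in any coordinate of `B`: otherwise `x j - x i` would be steeper than `y i`. -/
theorem nonneg_of_steepness_eq (h : IsSteepestDescentRun (polyhedron A B b d) B c k x y α)
    (horth : ∀ r, A *ᵥ r = 0 → B *ᵥ r = 0 → c ⬝ᵥ r = 0) (hjk : j ≤ k)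
    (hconst : ∀ p ∈ Finset.Ico i j, steepness B c (y p) = steepness B c (y i))
    {p q : ℕ} (hp : p ∈ Finset.Ico i j) (hq : q ∈ Finset.Ico i j) {m : Fin mB}
    (hpos : 0 < (B *ᵥ y p) m) : 0 ≤ (B *ᵥ y q) m := by
  have hik : i < k := by grind
  have hij : i ≤ j := by grind
  have hz : StrictlyFeasible (polyhedron A B b d) (x i) (x j - x i) :=
    ⟨1, one_pos, by simpa using h.mem j hjk⟩
  have hle := (h.steepest i hik).steepness_mul_le (h.mem i hik.le) horth hz
  rw [h.sub_eq_sum hij hjk, dotProduct_sum, mulVec_sum] at hle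
  have hcost : ∑ p ∈ Finset.Ico i j, c ⬝ᵥ (α p • y p) =
      steepness B c (y i) * ∑ p ∈ Finset.Ico i j, l1norm (B *ᵥ (α p • y p)) := by
    rw [Finset.mul_sum]
    refine Finset.sum_congr rfl fun p hp => ?_
    have hpk : p < k := by grind
    rw [dotProduct_smul, mulVec_smul, l1norm_smul, abs_of_pos (h.pos p hpk), ← hconst p hp,
      ← steepness_mul_l1norm (h.steepest p hpk).2.1, smul_eq_mul]
    ring
  rw [hcost, mul_le_mul_left_of_neg (h.steepness_neg hik)] at hle
  have hαq := h.pos q (by grind)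
  have := nonneg_of_sum_l1norm_le_l1norm_sum hle hp hq (i := m)
    (by simpa [mulVec_smul] using mul_pos (h.pos p (by grind)) hpos)
  simp only [mulVec_smul, Pi.smul_apply, smul_eq_mul] at this
  exact nonneg_of_mul_nonneg_right this hαq

theorem exists_tight (h : IsSteepestDescentRun (polyhedron A B b d) B c k x y α)
    (hmax : ∀ i < k, ∀ α' : ℝ, α i < α' → x i + α' • y i ∉ polyhedron A B b d) (hi : i < k) :
    ∃ m, 0 < (B *ᵥ y i) m ∧ (B *ᵥ x (i + 1)) m = d m := by
  by_contra! hslack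
  have hx₁ := h.mem (i + 1) hi
  have hAy := ((strictlyFeasible_polyhedron_iff (h.mem i hi.le)).1 (h.steepest i hi).1).1
  obtain ⟨ε, hε, hmem⟩ := (strictlyFeasible_polyhedron_iff hx₁).2
    ⟨hAy, fun m hm => (hx₁.2 m).lt_of_ne (hslack m hm)⟩
  refine hmax i hi (α i + ε) (by linarith) ?_
  rwa [add_smul, ← add_assoc, ← h.step i hi]

/-- A constraint made tight by step `i` stays tight while the steepness does not change: by
`nonneg_of_steepness_eq` no later step of that stretch moves away from it. -/
theorem mulVec_apply_eq_zero_of_tight (h : IsSteepestDescentRun (polyhedron A B b d) B c k x y α)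
    (horth : ∀ r, A *ᵥ r = 0 → B *ᵥ r = 0 → c ⬝ᵥ r = 0) {l : ℕ} {M : Fin mB} (hil : i < l)
    (hlk : l < k) (hst : steepness B c (y l) = steepness B c (y i))
    (hM : 0 < (B *ᵥ y i) M) (htight : (B *ᵥ x (i + 1)) M = d M) : (B *ᵥ y l) M = 0 := by
  have hconst : ∀ p ∈ Finset.Ico i (l + 1), steepness B c (y p) = steepness B c (y i) :=
    fun p hp => le_antisymm (hst ▸ h.steepness_mono horth (by grind) hlk)
      (h.steepness_mono horth (by grind) (by grind))
  have hnonneg : ∀ p ∈ Finset.Ico (i + 1) (l + 1), 0 ≤ α p * (B *ᵥ y p) M := fun p hp =>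
    mul_nonneg (h.pos p (by grind)).le
      (h.nonneg_of_steepness_eq horth hlk hconst (by grind) (by grind) hM)
  have hsum : ∑ p ∈ Finset.Ico (i + 1) (l + 1), α p * (B *ᵥ y p) M =
      (B *ᵥ x (l + 1)) M - (B *ᵥ x (i + 1)) M := by
    rw [← Pi.sub_apply, ← mulVec_sub, h.sub_eq_sum (by omega) hlk, mulVec_sum, Finset.sum_apply]
    simp [mulVec_smul]
  have hzero := (Finset.sum_eq_zero_iff_of_nonneg hnonneg).1
    (le_antisymm (by linarith [(h.mem (l + 1) hlk).2 M]) (Finset.sum_nonneg hnonneg)) l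
    (by grind)
  exact (mul_eq_zero.1 hzero).resolve_left (h.pos l hlk).ne'

theorem card_filter_steepness_eq_le (h : IsSteepestDescentRun (polyhedron A B b d) B c k x y α)
    (hmax : ∀ i < k, ∀ α' : ℝ, α i < α' → x i + α' • y i ∉ polyhedron A B b d)
    (horth : ∀ r, A *ᵥ r = 0 → B *ᵥ r = 0 → c ⬝ᵥ r = 0) (s : ℝ) :
    #{i ∈ Finset.range k | steepness B c (y i) = s} ≤
      Module.finrank ℝ (affineSpan ℝ (polyhedron A B b d)).direction := by
  set F := {i ∈ Finset.range k | steepness B c (y i) = s}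
  have hF : ∀ i : F, (i : ℕ) < k ∧ steepness B c (y i) = s := fun i => by
    simpa [F] using Finset.mem_filter.1 i.2
  choose M hM using fun i : F => h.exists_tight hmax (hF i).1
  have hli : LinearIndependent ℝ fun i : F => y i :=
    linearIndependent_of_triangular (fun i => (LinearMap.proj (M i)).comp B.mulVecLin)
      (fun i => (hM i).1.ne') fun i j hij => h.mulVec_apply_eq_zero_of_tight horth hij (hF j).1
        ((hF j).2.trans (hF i).2.symm) (hM i).1 (hM i).2
  calc #F = Fintype.card F := (Fintype.card_coe F).symm
    _ ≤ (Set.range fun i : F => y i).finrank ℝ := linearIndependent_iff_card_le_finrank_span.1 hli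
    _ ≤ _ := Submodule.finrank_mono <| Submodule.span_le.2 <|
      Set.range_subset_iff.2 fun i => h.mem_direction (hF i).1

end IsSteepestDescentRun

/-- Theorem 1: The number of steepest-descent augmentations needed to solve
`min {cᵀx : x ∈ P}` is at most `dim P` times the number of distinct steepness values
`cᵀg / ‖B g‖₁` over all circuits `g` of `P`. -/
theorem steepest_descent_augmentation_bound
    (n mA mB : ℕ) (A : Matrix (Fin mA) (Fin n) ℝ) (B : Matrix (Fin mB) (Fin n) ℝ)
    (b : Fin mA → ℝ) (d : Fin mB → ℝ) (c : Fin n → ℝ)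
    (P : Set (Fin n → ℝ))
    (hP : P = {x | A.mulVec x = b ∧ ∀ i, B.mulVec x i ≤ d i})
    (S : Set ℝ)
    (hS : S = {s : ℝ | ∃ g : Fin n → ℝ, IsCircuit A B g ∧
      s = c ⬝ᵥ g / (∑ i, |B.mulVec g i|)})
    (hSfin : S.Finite)
    (k : ℕ) (x : ℕ → (Fin n → ℝ)) (y : ℕ → (Fin n → ℝ)) (α : ℕ → ℝ)
    (hxP : ∀ i ≤ k, x i ∈ P)
    (hsd : ∀ i < k, IsSteepestDescentDirection P B c (x i) (y i))
    (hcy : ∀ i < k, c ⬝ᵥ y i < 0)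
    (hα : ∀ i < k, 0 < α i)
    (hstep : ∀ i < k, x (i + 1) = x i + α i • y i)
    (hmax : ∀ i < k, ∀ α' : ℝ, α i < α' → x i + α' • y i ∉ P) :
    k ≤ Module.finrank ℝ (affineSpan ℝ P).direction * S.ncard := by
  obtain rfl : P = polyhedron A B b d := hP
  obtain rfl : S = circuitSteepnesses A B c := hS
  have h : IsSteepestDescentRun (polyhedron A B b d) B c k x y α := ⟨hxP, hsd, hcy, hα, hstep⟩
  rcases Nat.eq_zero_or_pos k with rfl | hk
  · exact Nat.zero_le _
  obtain ⟨g, hg, -⟩ := exists_isCircuit_isSignConformal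
    ((strictlyFeasible_polyhedron_iff (hxP 0 hk.le)).1 (hsd 0 hk).1).1 (hsd 0 hk).2.1
  have horth : ∀ r, A *ᵥ r = 0 → B *ᵥ r = 0 → c ⬝ᵥ r = 0 :=
    fun r => dotProduct_eq_zero_of_circuitSteepnesses_finite hSfin hg
  have hsteep : ∀ i ∈ Finset.range k, steepness B c (y i) ∈ hSfin.toFinset := by
    intro i hi
    obtain ⟨g, hg, hst⟩ := (hsd i (Finset.mem_range.1 hi)).exists_isCircuit_steepness_eq
      (hxP i (Finset.mem_range.1 hi).le) horth
    exact hSfin.mem_toFinset.2 ⟨g, hg, hst.symm⟩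
  calc k = #(Finset.range k) := (Finset.card_range k).symm
    _ ≤ _ * #hSfin.toFinset := Finset.card_le_mul_card_image_of_maps_to hsteep _
      fun s _ => h.card_filter_steepness_eq_le hmax horth s
    _ = _ := by rw [Set.ncard_eq_toFinset_card _ hSfin]
end
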